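/- arXiv:2503.22546 — 3 statements merged into one kernel-verified Lean document; each statement's English description precedes it below -/
import Mathlib

section
/- Every compact Hausdorff zero-dimensional topological semigroup is residually finite: if S is a semigroup with a compact Hausdorff topology having a basis of clopen sets, and multiplication S × S → S is continuous, then for all x, y ∈ S with x ≠ y there exist a finite semigroup F, regarded as a discrete topological space, and a continuous semigroup homomorphism φ : S → F with φ(x) ≠ φ(y). (Numakura's theorem: Stone topological semigroups are profinite.) -/
/-!
Separate `x ≠ y` by a clopen set `U` and pass to the syntactic congruence of `U`, which identifies
`s` and `t` when no context `u * _ * v` (with `u`, `v` possibly empty) tells them apart with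
respect to `U`. Then `U` is a union of classes, so `x` and `y` stay apart in the quotient. Since
the contexts range over a compact space and multiplication is continuous, a tube-lemma argument
makes every class open; the quotient map is therefore locally constant, and compactness leaves
only finitely many classes.
-/

open Set Filter Topology

section SyntacticCongruence

variable {S : Type*} [Semigroup S]

/-- Contexts range over the monoid `WithOne S`, so that empty left or right factors are allowed. -/
def syntacticCon (U : Set S) : Con S where
  r s t := ∀ u v : WithOne S, u * s * v ∈ ((↑) '' U : Set (WithOne S)) ↔
    u * t * v ∈ ((↑) '' U : Set (WithOne S))
  iseqv := ⟨fun _ _ _ => Iff.rfl, fun h u v => (h u v).symm,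
    fun h h' u v => (h u v).trans (h' u v)⟩
  mul' {w x y z} h h' u v := by
    simp only [WithOne.coe_mul, ← mul_assoc]
    calc _ ↔ u * w * (y * v) ∈ ((↑) '' U : Set (WithOne S)) := by rw [mul_assoc _ _ v]
      _ ↔ u * x * (y * v) ∈ ((↑) '' U : Set (WithOne S)) := h u _
      _ ↔ u * x * z * v ∈ ((↑) '' U : Set (WithOne S)) := by rw [← mul_assoc]; exact h' _ v

theorem syntacticCon_iff {U : Set S} {s t : S} :
    syntacticCon U s t ↔ (s ∈ U ↔ t ∈ U) ∧ (∀ u, u * s ∈ U ↔ u * t ∈ U) ∧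
      (∀ v, s * v ∈ U ↔ t * v ∈ U) ∧ ∀ u v, u * s * v ∈ U ↔ u * t * v ∈ U := by
  simp only [syntacticCon, Con.rel_mk, WithOne.forall, ← WithOne.coe_mul, one_mul, mul_one,
    WithOne.coe_injective.mem_set_image, forall_and, and_assoc]

theorem not_syntacticCon_of_mem_of_notMem {U : Set S} {x y : S} (hx : x ∈ U) (hy : y ∉ U) :
    ¬syntacticCon U x y :=
  fun h => hy ((syntacticCon_iff.mp h).1.mp hx)

end SyntacticCongruence

theorem IsClopen.eventually_mem_iff {X : Type*} [TopologicalSpace X] {U : Set X}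
    (hU : IsClopen U) (x₀ : X) : ∀ᶠ x in 𝓝 x₀, x ∈ U ↔ x₀ ∈ U := by
  by_cases h : x₀ ∈ U
  · filter_upwards [hU.isOpen.mem_nhds h] with x hx using iff_of_true hx h
  · filter_upwards [hU.isClosed.isOpen_compl.mem_nhds h] with x hx using iff_of_false hx h

theorem IsClopen.eventually_forall_mem_iff {K X Y : Type*} [TopologicalSpace K] [CompactSpace K]
    [TopologicalSpace X] [TopologicalSpace Y] {f : K → X → Y}
    (hf : Continuous fun p : K × X => f p.1 p.2) {U : Set Y} (hU : IsClopen U) (x₀ : X) :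
    ∀ᶠ x in 𝓝 x₀, ∀ k, f k x ∈ U ↔ f k x₀ ∈ U := by
  have hf' : Continuous fun z : X × K => f z.2 z.1 := hf.comp continuous_swap
  have hf₀ : Continuous fun z : X × K => f z.2 x₀ :=
    hf.comp (continuous_snd.prodMk continuous_const)
  have := isCompact_univ.eventually_forall_of_forall_eventually (x₀ := x₀)
    (P := fun x k => f k x ∈ U ↔ f k x₀ ∈ U) fun k _ => by
      filter_upwards [hf'.continuousAt.eventually (hU.eventually_mem_iff (f k x₀)),
        hf₀.continuousAt.eventually (hU.eventually_mem_iff (f k x₀))] with z h h₀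
      exact h.trans h₀.symm
  simpa using this

theorem isLocallyConstant_syntacticCon_mk {S : Type*} [Semigroup S] [TopologicalSpace S]
    [CompactSpace S] (hmul : Continuous fun p : S × S => p.1 * p.2) {U : Set S}
    (hU : IsClopen U) : IsLocallyConstant ((↑) : S → (syntacticCon U).Quotient) := by
  refine (IsLocallyConstant.iff_eventually_eq _).mpr fun s => ?_
  have hright : Continuous fun p : S × S => p.2 * p.1 := hmul.comp continuous_swap
  have htwo : Continuous fun p : (S × S) × S => p.1.1 * p.2 * p.1.2 := by fun_prop
  filter_upwards [hU.eventually_mem_iff s,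
    hU.eventually_forall_mem_iff (f := fun u t => u * t) hmul s,
    hU.eventually_forall_mem_iff (f := fun v t => t * v) hright s,
    hU.eventually_forall_mem_iff (f := fun (p : S × S) t => p.1 * t * p.2) htwo s]
    with t h₀ hl hr h₂
  exact (syntacticCon U).eq.mpr (syntacticCon_iff.mpr ⟨h₀, hl, hr, fun u v => h₂ (u, v)⟩)

/-- **Numakura's theorem.** Every compact Hausdorff zero-dimensional topological
semigroup is residually finite: distinct points are separated by a continuous
homomorphism onto a finite (discrete) semigroup. -/
theorem stone_topological_semigroup_residually_finite
    (S : Type) [Semigroup S] [TopologicalSpace S] [CompactSpace S] [T2Space S]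
    (hbasis : TopologicalSpace.IsTopologicalBasis {U : Set S | IsClopen U})
    (hmul : Continuous fun p : S × S => p.1 * p.2)
    (x y : S) (hxy : x ≠ y) :
    ∃ (F : Type) (_ : Semigroup F) (_ : Finite F) (φ : S →ₙ* F),
      @Continuous S F _ ⊥ (⇑φ) ∧ φ x ≠ φ y := by
  obtain ⟨U, hU, hxU, hUy⟩ :=
    hbasis.exists_subset_of_mem_open (mem_compl_singleton_iff.mpr hxy) isOpen_compl_singleton
  have hloc := isLocallyConstant_syntacticCon_mk hmul hU
  have hfin : Finite (syntacticCon U).Quotient :=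
    finite_univ_iff.mp (Quotient.mk''_surjective.range_eq ▸ hloc.range_finite)
  exact ⟨(syntacticCon U).Quotient, inferInstance, hfin, ⟨(↑), fun _ _ => rfl⟩,
    @IsLocallyConstant.continuous _ _ _ ⊥ _ hloc, fun h => not_syntacticCon_of_mem_of_notMem hxU
      (fun hy => hUy hy rfl) ((syntacticCon U).eq.mp h)⟩
end

section
/- Every nonempty compact Hausdorff topological semigroup S has a minimum two-sided ideal: there exists a nonempty subset K ⊆ S with S·K ⊆ K and K·S ⊆ K such that K ⊆ I for every nonempty subset I ⊆ S satisfying S·I ⊆ I and I·S ⊆ I; moreover K is closed in S. -/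
/-!
For each `x`, the set `S x S` of products `u * x * v` is a two-sided ideal, compact as a
continuous image of `S × S`, hence closed. These ideals form a directed family, since
`S (x y) S ⊆ S x S ∩ S y S`, so by compactness their intersection `K` is nonempty. `K` is an
ideal, and any ideal `I` containing some `x` contains `S x S ⊇ K`.
-/

namespace Semigroup

variable {S : Type*} [Semigroup S]

def IsTwoSidedIdeal (I : Set S) : Prop :=
  ∀ s : S, ∀ x ∈ I, s * x ∈ I ∧ x * s ∈ I

/-- The ideal `S x S`; it need not contain `x`, as `S` has no identity. -/
def sandwich (x : S) : Set S :=
  Set.range fun p : S × S => p.1 * x * p.2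

theorem isTwoSidedIdeal_sandwich (x : S) : IsTwoSidedIdeal (sandwich x) := by
  rintro s _ ⟨⟨u, v⟩, rfl⟩
  exact ⟨⟨(s * u, v), by simp only [mul_assoc]⟩, ⟨(u, v * s), by simp only [mul_assoc]⟩⟩

theorem isTwoSidedIdeal_iInter {ι : Sort*} {I : ι → Set S} (hI : ∀ i, IsTwoSidedIdeal (I i)) :
    IsTwoSidedIdeal (⋂ i, I i) := fun s x hx =>
  ⟨Set.mem_iInter.2 fun i => (hI i s x (Set.mem_iInter.1 hx i)).1,
    Set.mem_iInter.2 fun i => (hI i s x (Set.mem_iInter.1 hx i)).2⟩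

theorem IsTwoSidedIdeal.sandwich_subset {I : Set S} (hI : IsTwoSidedIdeal I) {x : S}
    (hx : x ∈ I) : sandwich x ⊆ I := by
  rintro _ ⟨⟨u, v⟩, rfl⟩
  exact (hI v _ (hI u x hx).1).2

theorem sandwich_mul_subset_left (x y : S) : sandwich (x * y) ⊆ sandwich x := by
  rintro _ ⟨⟨u, v⟩, rfl⟩
  exact ⟨(u, y * v), by simp only [mul_assoc]⟩

theorem sandwich_mul_subset_right (x y : S) : sandwich (x * y) ⊆ sandwich y := by
  rintro _ ⟨⟨u, v⟩, rfl⟩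
  exact ⟨(u * x, v), by simp only [mul_assoc]⟩

theorem directed_sandwich : Directed (· ⊇ ·) (sandwich : S → Set S) := fun x y =>
  ⟨x * y, sandwich_mul_subset_left x y, sandwich_mul_subset_right x y⟩

theorem sandwich_nonempty (x : S) : (sandwich x).Nonempty :=
  ⟨x * x * x, (x, x), rfl⟩

section Topology

variable [TopologicalSpace S] [CompactSpace S] [ContinuousMul S]

theorem isCompact_sandwich (x : S) : IsCompact (sandwich x) :=
  isCompact_range (by fun_prop)

theorem nonempty_iInter_sandwich [Nonempty S] [T2Space S] : (⋂ x : S, sandwich x).Nonempty :=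
  IsCompact.nonempty_iInter_of_directed_nonempty_isCompact_isClosed _ directed_sandwich
    sandwich_nonempty isCompact_sandwich fun x => (isCompact_sandwich x).isClosed

end Topology

end Semigroup

/-- Every nonempty compact Hausdorff topological semigroup has a minimum two-sided
ideal, and this ideal is closed. -/
theorem compact_semigroup_minimum_ideal
    (S : Type) [Semigroup S] [Nonempty S] [TopologicalSpace S] [CompactSpace S]
    [T2Space S] (hmul : Continuous fun p : S × S => p.1 * p.2) :
    ∃ K : Set S, K.Nonempty ∧
      (∀ s : S, ∀ k ∈ K, s * k ∈ K ∧ k * s ∈ K) ∧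
      (∀ I : Set S, I.Nonempty → (∀ s : S, ∀ x ∈ I, s * x ∈ I ∧ x * s ∈ I) → K ⊆ I) ∧
      IsClosed K := by
  have : ContinuousMul S := ⟨hmul⟩
  refine ⟨⋂ x : S, Semigroup.sandwich x, Semigroup.nonempty_iInter_sandwich,
    Semigroup.isTwoSidedIdeal_iInter Semigroup.isTwoSidedIdeal_sandwich, ?_,
    isClosed_iInter fun x => (Semigroup.isCompact_sandwich x).isClosed⟩
  rintro I ⟨x, hx⟩ hI
  exact (Set.iInter_subset _ x).trans (Semigroup.IsTwoSidedIdeal.sandwich_subset hI hx)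
end

section
/- Let S be a semigroup and let e, f ∈ S be idempotents lying in the same 𝒟-class of S. Then the maximal subgroups H_e and H_f are isomorphic as groups; here H_e (the ℋ-class of e) is a group under the multiplication of S with identity element e, and likewise for H_f. -/
variable {S : Type} [Semigroup S]

/-- `a ≤_ℛ b` : `a = b` or `a = b·x` for some `x`. -/
def RPreorder (a b : S) : Prop := a = b ∨ ∃ x : S, a = b * x

/-- `a ≤_ℒ b` : `a = b` or `a = x·b` for some `x`. -/
def LPreorder (a b : S) : Prop := a = b ∨ ∃ x : S, a = x * b

/-- Green's relation `ℛ`. -/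
def RRel (a b : S) : Prop := RPreorder a b ∧ RPreorder b a

/-- Green's relation `ℒ`. -/
def LRel (a b : S) : Prop := LPreorder a b ∧ LPreorder b a

/-- Green's relation `ℋ`. -/
def HRel (a b : S) : Prop := RRel a b ∧ LRel a b

/-- Green's relation `𝒟`. -/
def DRel (a b : S) : Prop := ∃ c : S, RRel a c ∧ LRel c b

/-- The `ℋ`-class of an element. -/
def HClass (e : S) : Set S := {a : S | HRel a e}

/-- `K` is a group under the multiplication of `S`, with identity element `e`:
it contains `e`, is closed under multiplication, `e` is a two-sided identity on `K`,
and every element of `K` has a two-sided inverse in `K` relative to `e`. -/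
def IsGroupWithIdentity (K : Set S) (e : S) : Prop :=
  e ∈ K ∧
  (∀ a ∈ K, ∀ b ∈ K, a * b ∈ K) ∧
  (∀ a ∈ K, a * e = a ∧ e * a = a) ∧
  (∀ a ∈ K, ∃ b ∈ K, a * b = e ∧ b * a = e)

/-!
Idempotents lying in one `𝒟`-class are of the form `e = c * b` and `f = b * c` for a pair of
mutually inverse elements `c * b * c = c`, `b * c * b = b` (take `c` with `e ℛ c ℒ f`). An element
`x` lies in `H_e` exactly when `e * x = x = x * e` and `x` has an inverse relative to `e`; from this
`H_e` is a group, and conjugation `x ↦ b * x * c` is a multiplicative bijection `H_e → H_f`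
whose inverse is `y ↦ c * y * b`.
-/

section Green

variable {a e : S}

theorem rPreorder_iff_mul_eq (he : e * e = e) : RPreorder a e ↔ e * a = a := by
  refine ⟨?_, fun h => Or.inr ⟨a, h.symm⟩⟩
  rintro (rfl | ⟨x, rfl⟩)
  · exact he
  · rw [← mul_assoc, he]

theorem lPreorder_iff_mul_eq (he : e * e = e) : LPreorder a e ↔ a * e = a := by
  refine ⟨?_, fun h => Or.inr ⟨a, h.symm⟩⟩
  rintro (rfl | ⟨x, rfl⟩)
  · exact he
  · rw [mul_assoc, he]

theorem idem_rPreorder_iff (he : e * e = e) : RPreorder e a ↔ ∃ s, a * s = e := by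
  refine ⟨?_, fun ⟨s, hs⟩ => Or.inr ⟨s, hs.symm⟩⟩
  rintro (rfl | ⟨s, rfl⟩)
  exacts [⟨e, he⟩, ⟨s, rfl⟩]

theorem idem_lPreorder_iff (he : e * e = e) : LPreorder e a ↔ ∃ t, t * a = e := by
  refine ⟨?_, fun ⟨t, ht⟩ => Or.inr ⟨t, ht.symm⟩⟩
  rintro (rfl | ⟨t, rfl⟩)
  exacts [⟨e, he⟩, ⟨t, rfl⟩]

theorem mem_hClass_iff (he : e * e = e) :
    a ∈ HClass e ↔ e * a = a ∧ a * e = a ∧ ∃ y, a * y = e ∧ y * a = e := by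
  simp only [HClass, HRel, RRel, LRel, rPreorder_iff_mul_eq he,
    lPreorder_iff_mul_eq he, idem_rPreorder_iff he, idem_lPreorder_iff he]
  constructor
  · rintro ⟨⟨hea, s, hs⟩, hae, t, ht⟩
    -- `t * e = t * a * s = e * s` is a two-sided inverse
    refine ⟨hea, hae, t * e, ?_, by rw [mul_assoc, hea, ht]⟩
    calc a * (t * e) = a * (t * a * s) := by rw [mul_assoc t, hs]
      _ = e := by rw [ht, ← mul_assoc, hae, hs]
  · rintro ⟨hea, hae, y, hay, hya⟩
    exact ⟨⟨hea, y, hay⟩, hae, y, hya⟩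

theorem isGroupWithIdentity_hClass (he : e * e = e) : IsGroupWithIdentity (HClass e) e := by
  simp only [IsGroupWithIdentity, mem_hClass_iff he]
  refine ⟨⟨he, he, e, he, he⟩, ?_, fun _ ⟨hea, hae, _⟩ => ⟨hae, hea⟩, ?_⟩
  · rintro a ⟨hea, hae, a', haa', ha'a⟩ b ⟨heb, hbe, b', hbb', hb'b⟩
    refine ⟨by rw [← mul_assoc, hea], by rw [mul_assoc, hbe], b' * a', ?_, ?_⟩
    · rw [mul_assoc, ← mul_assoc b, hbb', ← mul_assoc, hae, haa']
    · rw [mul_assoc, ← mul_assoc a', ha'a, ← mul_assoc, mul_assoc b', heb, hb'b]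
  · rintro a ⟨hea, hae, y, hay, hya⟩
    -- an inverse of `a` relative to `e` need not lie in `H_e`, but `e * y * e` does
    refine ⟨e * y * e, ⟨by rw [← mul_assoc, ← mul_assoc, he], by rw [mul_assoc, he],
      a, ?_, ?_⟩, ?_, ?_⟩
    · rw [mul_assoc, hea, mul_assoc, hya, he]
    · rw [← mul_assoc, ← mul_assoc, hae, hay, he]
    · rw [← mul_assoc, ← mul_assoc, hae, hay, he]
    · rw [mul_assoc, hea, mul_assoc, hya, he]

end Green

section MutualInverses

variable {b c x y : S}

theorem mul_self_of_mul_mul_eq (hc : c * b * c = c) : c * b * (c * b) = c * b := by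
  rw [← mul_assoc, hc]

theorem conj_mul_conj : b * x * c * (b * y * c) = b * (x * (c * b) * y) * c := by
  simp only [mul_assoc]

theorem conj_mem_hClass (hc : c * b * c = c) (hb : b * c * b = b) (hx : x ∈ HClass (c * b)) :
    b * x * c ∈ HClass (b * c) := by
  obtain ⟨hex, hxe, x', hxx', hx'x⟩ := (mem_hClass_iff (mul_self_of_mul_mul_eq hc)).1 hx
  have hbcb : b * (c * b) * c = b * c := by simp only [← mul_assoc]; rw [hb]
  refine (mem_hClass_iff (mul_self_of_mul_mul_eq hb)).2
    ⟨by simp only [← mul_assoc]; rw [hb], ?_, b * x' * c, ?_, ?_⟩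
  · calc b * x * c * (b * c) = b * (x * (c * b)) * c := by simp only [mul_assoc]
      _ = b * x * c := by rw [hxe]
  · rw [conj_mul_conj, hxe, hxx', hbcb]
  · rw [conj_mul_conj, mul_assoc x', hex, hx'x, hbcb]

theorem conj_conj_of_mem_hClass (hc : c * b * c = c) (hx : x ∈ HClass (c * b)) :
    c * (b * x * c) * b = x := by
  obtain ⟨hex, hxe, -⟩ := (mem_hClass_iff (mul_self_of_mul_mul_eq hc)).1 hx
  calc c * (b * x * c) * b = c * b * x * (c * b) := by simp only [mul_assoc]
    _ = x := by rw [hex, hxe]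

theorem bijOn_conj_hClass (hc : c * b * c = c) (hb : b * c * b = b) :
    Set.BijOn (fun x => b * x * c) (HClass (c * b)) (HClass (b * c)) :=
  Set.InvOn.bijOn ⟨fun _ hx => conj_conj_of_mem_hClass hc hx,
      fun _ hy => conj_conj_of_mem_hClass hb hy⟩
    (fun _ hx => conj_mem_hClass hc hb hx) (fun _ hy => conj_mem_hClass hb hc hy)

theorem conj_mul_of_mem_hClass (hc : c * b * c = c) (hx : x ∈ HClass (c * b)) :
    b * (x * y) * c = b * x * c * (b * y * c) := by
  obtain ⟨-, hxe, -⟩ := (mem_hClass_iff (mul_self_of_mul_mul_eq hc)).1 hx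
  rw [conj_mul_conj, hxe]

end MutualInverses

theorem exists_mutual_inverse_of_rRel_of_lRel {e c f : S} (he : e * e = e) (hf : f * f = f)
    (hec : RRel e c) (hcf : LRel c f) :
    ∃ b, c * b = e ∧ b * c = f ∧ c * b * c = c ∧ b * c * b = b := by
  have hec' : e * c = c := (rPreorder_iff_mul_eq he).1 hec.2
  obtain ⟨v, hv⟩ := (idem_rPreorder_iff he).1 hec.1
  have hcf' : c * f = c := (lPreorder_iff_mul_eq hf).1 hcf.1
  obtain ⟨q, hq⟩ := (idem_lPreorder_iff hf).1 hcf.2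
  -- `q` satisfies `q * c = f`; sandwiching it between `f` and `e` makes it inverse to `c`
  have hcb : c * (f * q * e) = e :=
    calc c * (f * q * e) = c * f * q * (c * v) := by rw [hv]; simp only [mul_assoc]
      _ = c * (q * c) * v := by rw [hcf']; simp only [mul_assoc]
      _ = e := by rw [hq, hcf', hv]
  have hbc : f * q * e * c = f := by rw [mul_assoc, hec', mul_assoc, hq, hf]
  refine ⟨f * q * e, hcb, hbc, by rw [hcb, hec'], ?_⟩
  rw [hbc, ← mul_assoc, ← mul_assoc, hf]

/-- If `e` and `f` are idempotents in the same `𝒟`-class of a semigroup `S`, then the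
maximal subgroups `H_e` and `H_f` (which are groups under the multiplication of `S`
with identities `e` and `f` respectively) are isomorphic as groups: there is a
bijection from `H_e` onto `H_f` preserving multiplication. -/
theorem maximal_subgroups_isomorphic (e f : S)
    (he : e * e = e) (hf : f * f = f) (hD : DRel e f) :
    IsGroupWithIdentity (HClass e) e ∧
    IsGroupWithIdentity (HClass f) f ∧
    ∃ φ : S → S, Set.BijOn φ (HClass e) (HClass f) ∧
      ∀ a ∈ HClass e, ∀ b ∈ HClass e, φ (a * b) = φ a * φ b := by
  obtain ⟨c, hec, hcf⟩ := hD
  obtain ⟨b, rfl, rfl, hc, hb⟩ := exists_mutual_inverse_of_rRel_of_lRel he hf hec hcf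
  exact ⟨isGroupWithIdentity_hClass he, isGroupWithIdentity_hClass hf, fun x => b * x * c,
    bijOn_conj_hClass hc hb, fun _ hx _ _ => conj_mul_of_mem_hClass hc hx⟩
end
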